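/- For every n ≥ 6, there exists a planar graph on n vertices containing at least h₀(n) induced 6-cycles; consequently f_I(n, C₆) ≥ h₀(n). -/

import Mathlib

open SimpleGraph

/-- `H` is a minor of `G`: there is a family of nonempty, connected, pairwise disjoint
branch sets in `G`, one for each vertex of `H`, such that adjacent vertices of `H`
have adjacent branch sets. -/
def IsMinorOf {W : Type*} {V : Type*} (H : SimpleGraph W) (G : SimpleGraph V) : Prop :=
  ∃ φ : W → Set V,
    (∀ w, (G.induce (φ w)).Connected) ∧
    (Pairwise fun w₁ w₂ => Disjoint (φ w₁) (φ w₂)) ∧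
    ∀ ⦃w₁ w₂⦄, H.Adj w₁ w₂ → ∃ x ∈ φ w₁, ∃ y ∈ φ w₂, G.Adj x y

/-- A graph is planar iff (by Wagner's theorem) it has no `K₅` minor and no `K₃,₃` minor. -/
def SimpleGraph.Planar {V : Type*} (G : SimpleGraph V) : Prop :=
  ¬ IsMinorOf (completeGraph (Fin 5)) G ∧
  ¬ IsMinorOf (completeBipartiteGraph (Fin 3) (Fin 3)) G

/-- `s` is a set of `m` vertices of `G` whose induced subgraph is a cycle of length `m`. -/
def IsIndCycle {V : Type*} (G : SimpleGraph V) (m : ℕ) (s : Finset V) : Prop :=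
  s.card = m ∧ Nonempty ((G.induce (s : Set V)) ≃g (cycleGraph m))

/-- The number of induced 6-cycles of `G`. -/
noncomputable def c6Count {V : Type*} [Fintype V] (G : SimpleGraph V) : ℕ :=
  {s : Finset V | IsIndCycle G 6 s}.ncard

/-- The number of induced 6-cycles of `G` containing the vertex `v`. -/
noncomputable def c6CountAt {V : Type*} [Fintype V] (G : SimpleGraph V) (v : V) : ℕ :=
  {s : Finset V | IsIndCycle G 6 s ∧ v ∈ s}.ncard

/-- `f_I(n, C₆)`: the maximum number of induced 6-cycles over all planar graphs
on `n` vertices. -/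
noncomputable def fI (n : ℕ) : ℕ :=
  sSup {m | ∃ G : SimpleGraph (Fin n), G.Planar ∧ c6Count G = m}

def h0 (n : ℕ) : ℕ :=
  if n % 3 = 0 then (n / 3 - 1) ^ 3
  else if n % 3 = 1 then ((n - 4) / 3) ^ 2 * ((n - 1) / 3)
  else ((n - 2) / 3) ^ 2 * ((n - 5) / 3)

def h1 (n : ℕ) : ℕ :=
  if n % 3 = 0 then (n / 3 - 1) ^ 2
  else if n % 3 = 1 then ((n - 4) / 3) ^ 2
  else ((n - 2) / 3) * ((n - 5) / 3)

/-- `x` and `y` are principal neighbours in `G`: they are adjacent and some induced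
6-cycle of `G` contains both of them. -/
def PrincipalNbr {V : Type*} (G : SimpleGraph V) (x y : V) : Prop :=
  G.Adj x y ∧ ∃ s : Finset V, IsIndCycle G 6 s ∧ x ∈ s ∧ y ∈ s

/-- `X^{uvw}`: the vertices of `G - {u,v,w}` lying in some induced 6-cycle of `G`
containing the path `u-v-w` (i.e. containing `u`, `v` and `w`). -/
def Xset {V : Type*} (G : SimpleGraph V) (u v w : V) : Set V :=
  {x | x ≠ u ∧ x ≠ v ∧ x ≠ w ∧
    ∃ s : Finset V, IsIndCycle G 6 s ∧ u ∈ s ∧ v ∈ s ∧ w ∈ s ∧ x ∈ s}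

def X1set {V : Type*} (G : SimpleGraph V) (u v w : V) : Set V :=
  Xset G u v w ∩ G.neighborSet u

def X3set {V : Type*} (G : SimpleGraph V) (u v w : V) : Set V :=
  Xset G u v w ∩ G.neighborSet w

def X2set {V : Type*} (G : SimpleGraph V) (u v w : V) : Set V :=
  Xset G u v w \ (X1set G u v w ∪ X3set G u v w)

/-- The bipartite subgraph of `G` induced between the disjoint vertex sets `S` and `T`:
the graph on `S ∪ T` whose edges are exactly the edges of `G` with one endpoint in `S`
and one in `T`. -/
def bipBetween {V : Type*} (G : SimpleGraph V) (S T : Set V) : SimpleGraph ↑(S ∪ T) where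
  Adj x y := G.Adj x y ∧ ((↑x ∈ S ∧ ↑y ∈ T) ∨ (↑x ∈ T ∧ ↑y ∈ S))
  symm := by
    constructor
    intro x y ⟨h, h2⟩
    exact ⟨h.symm, (h2.imp And.symm And.symm).symm⟩
  loopless := by
    constructor
    intro x ⟨h, _⟩
    exact h.ne rfl

/-- `a b c d e f` are the vertices, in cyclic order, of an induced 6-cycle of `G`. -/
def IsIndC6On {V : Type*} [DecidableEq V] (G : SimpleGraph V) (a b c d e f : V) : Prop :=
  ([a, b, c, d, e, f] : List V).Nodup ∧
  IsIndCycle G 6 {a, b, c, d, e, f} ∧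
  G.Adj a b ∧ G.Adj b c ∧ G.Adj c d ∧ G.Adj d e ∧ G.Adj e f ∧ G.Adj f a ∧
  ¬ G.Adj a c ∧ ¬ G.Adj a d ∧ ¬ G.Adj a e ∧
  ¬ G.Adj b d ∧ ¬ G.Adj b e ∧ ¬ G.Adj b f ∧
  ¬ G.Adj c e ∧ ¬ G.Adj c f ∧ ¬ G.Adj d f

/-- `x` and `y` are consecutive entries (in either order) of the list `l`. -/
def ListConsec {V : Type*} (l : List V) (x y : V) : Prop :=
  ∃ i : ℕ, (l[i]? = some x ∧ l[i + 1]? = some y) ∨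
           (l[i]? = some y ∧ l[i + 1]? = some x)

/-- The data witnessing that `G` belongs to the family `𝓕_n` (with `n = Fintype.card V`):
the vertex set is partitioned as `{u₁,u₂,u₃} ∪ A ∪ B ∪ C` with `|A|, |B|, |C|` as equal
as possible, every vertex of `A` is joined to `u₁, u₂`, every vertex of `B` to `u₂, u₃`,
every vertex of `C` to `u₃, u₁`, and all remaining edges are consecutive along some
fixed orderings (paths) of `A`, `B`, `C`. -/
def FWitness {V : Type*} [Fintype V] [DecidableEq V] (G : SimpleGraph V) (u1 u2 u3 : V)
    (A B C : Finset V) : Prop :=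
  u1 ≠ u2 ∧ u1 ≠ u3 ∧ u2 ≠ u3 ∧
  u1 ∉ A ∪ B ∪ C ∧ u2 ∉ A ∪ B ∪ C ∧ u3 ∉ A ∪ B ∪ C ∧
  Disjoint A B ∧ Disjoint A C ∧ Disjoint B C ∧
  ({u1, u2, u3} : Finset V) ∪ A ∪ B ∪ C = Finset.univ ∧
  A.card + B.card + C.card = Fintype.card V - 3 ∧
  A.card ≤ B.card + 1 ∧ B.card ≤ A.card + 1 ∧
  A.card ≤ C.card + 1 ∧ C.card ≤ A.card + 1 ∧
  B.card ≤ C.card + 1 ∧ C.card ≤ B.card + 1 ∧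
  (∀ a ∈ A, G.Adj u1 a ∧ G.Adj u2 a) ∧
  (∀ b ∈ B, G.Adj u2 b ∧ G.Adj u3 b) ∧
  (∀ c ∈ C, G.Adj u3 c ∧ G.Adj u1 c) ∧
  ∃ la lb lc : List V,
    la.Nodup ∧ lb.Nodup ∧ lc.Nodup ∧
    la.toFinset = A ∧ lb.toFinset = B ∧ lc.toFinset = C ∧
    ∀ x y, G.Adj x y →
      (x = u1 ∧ (y ∈ A ∨ y ∈ C)) ∨ (y = u1 ∧ (x ∈ A ∨ x ∈ C)) ∨
      (x = u2 ∧ (y ∈ A ∨ y ∈ B)) ∨ (y = u2 ∧ (x ∈ A ∨ x ∈ B)) ∨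
      (x = u3 ∧ (y ∈ B ∨ y ∈ C)) ∨ (y = u3 ∧ (x ∈ B ∨ x ∈ C)) ∨
      ListConsec la x y ∨ ListConsec lb x y ∨ ListConsec lc x y

/-- `G` belongs to the family `𝓕_n`, where `n = Fintype.card V`. -/
def InFFamily {V : Type*} [Fintype V] [DecidableEq V] (G : SimpleGraph V) : Prop :=
  ∃ (u1 u2 u3 : V) (A B C : Finset V), FWitness G u1 u2 u3 A B C

/-! Take three hubs `u₀, u₁, u₂` and three independent blocks `A, B, C` of sizes
`⌊(n-3)/3⌋, ⌊(n-2)/3⌋, ⌊(n-1)/3⌋`, whose product is `h₀(n)`, joining `A` to `u₀, u₁`, `B` to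
`u₁, u₂` and `C` to `u₂, u₀`. Each triple `(a, b, c) ∈ A × B × C` spans the induced 6-cycle
`u₀ a u₁ b u₂ c`. The graph is planar: a `K₅` or `K₃,₃` minor has more than three branch sets, so
one of them avoids the hubs; being connected inside an independent set it is a single block
vertex, which would need three neighbours in the minor, but block vertices have degree two. -/

lemma exists_disjoint_of_card_lt {W V : Type*} [Fintype W] {φ : W → Set V}
    (hdisj : Pairwise fun w₁ w₂ => Disjoint (φ w₁) (φ w₂)) (s : Finset V)
    (hs : s.card < Fintype.card W) : ∃ w, Disjoint (φ w) s := by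
  by_contra! h
  simp only [Set.not_disjoint_iff, Finset.mem_coe] at h
  choose g hgφ hgs using h
  obtain ⟨w₁, -, w₂, -, hne, heq⟩ :=
    Finset.exists_ne_map_eq_of_card_lt_of_maps_to (s := Finset.univ) (t := s)
      (by simpa using hs) (f := g) fun w _ => hgs w
  exact (hdisj hne).ne_of_mem (hgφ w₁) (hgφ w₂) heq

lemma SimpleGraph.exists_eq_singleton_of_connected_induce {V : Type*} {G : SimpleGraph V}
    {S : Set V} (hS : (G.induce S).Connected) (hind : ∀ x ∈ S, ∀ y ∈ S, ¬ G.Adj x y) :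
    ∃ x, S = {x} := by
  have hbot : G.induce S = ⊥ := by
    ext ⟨x, hx⟩ ⟨y, hy⟩
    simpa using hind x hx y hy
  rw [hbot, connected_bot_iff, Set.subsingleton_coe, Set.nonempty_coe_sort] at hS
  obtain ⟨hsub, x, hx⟩ := hS
  exact ⟨x, hsub.eq_singleton_of_mem hx⟩

lemma not_isMinorOf_of_hubs {W V : Type*} [Fintype W] [Finite V] {H : SimpleGraph W}
    {G : SimpleGraph V} (s : Finset V) (hcard : s.card < Fintype.card W)
    (hH : ∀ w, 3 ≤ (H.neighborSet w).ncard) (hind : ∀ x ∉ s, ∀ y ∉ s, ¬ G.Adj x y)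
    (hdeg : ∀ x ∉ s, (G.neighborSet x).ncard ≤ 2) : ¬ IsMinorOf H G := by
  rintro ⟨φ, hconn, hdisj, hadj⟩
  obtain ⟨w, hw⟩ := exists_disjoint_of_card_lt hdisj s hcard
  have hws : ∀ x ∈ φ w, x ∉ s := fun x hx hxs => Set.disjoint_left.mp hw hx hxs
  obtain ⟨x, hx⟩ := exists_eq_singleton_of_connected_induce (hconn w) fun x hx y hy =>
    hind x (hws x hx) y (hws y hy)
  have hnbr : ∀ t, ∃ y, H.Adj w t → y ∈ φ t ∧ G.Adj x y := fun t => by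
    by_cases ht : H.Adj w t
    · obtain ⟨x', hx', y, hy, hxy⟩ := hadj ht
      rw [hx, Set.mem_singleton_iff] at hx'
      exact ⟨y, fun _ => ⟨hy, hx' ▸ hxy⟩⟩
    · exact ⟨x, fun h => absurd h ht⟩
  choose f hf using hnbr
  have hle : (H.neighborSet w).ncard ≤ (G.neighborSet x).ncard :=
    Set.ncard_le_ncard_of_injOn f (fun t ht => (hf t ht).2) (fun t ht t' ht' h =>
      by_contra fun hne => (hdisj hne).ne_of_mem (hf t ht).1 (hf t' ht').1 h) (Set.toFinite _)
  have := hdeg x (hws x (hx ▸ rfl))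
  have := hH w
  omega

lemma completeBipartiteGraph_three_le_ncard_neighborSet (w : Fin 3 ⊕ Fin 3) :
    3 ≤ ((completeBipartiteGraph (Fin 3) (Fin 3)).neighborSet w).ncard := by
  rcases w with i | i
  · have : (completeBipartiteGraph (Fin 3) (Fin 3)).neighborSet (.inl i) = Set.range Sum.inr := by
      ext (j | j) <;> simp
    simp [this, Set.ncard_range_of_injective Sum.inr_injective]
  · have : (completeBipartiteGraph (Fin 3) (Fin 3)).neighborSet (.inr i) = Set.range Sum.inl := by
      ext (j | j) <;> simp
    simp [this, Set.ncard_range_of_injective Sum.inl_injective]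

theorem SimpleGraph.planar_of_hubs {V : Type*} [Finite V] (G : SimpleGraph V) (s : Finset V)
    (hs : s.card ≤ 3) (hind : ∀ x ∉ s, ∀ y ∉ s, ¬ G.Adj x y)
    (hdeg : ∀ x ∉ s, (G.neighborSet x).ncard ≤ 2) : G.Planar :=
  ⟨not_isMinorOf_of_hubs s (by rw [Fintype.card_fin]; omega)
      (fun w => by simp [Set.ncard_eq_toFinset_card', Finset.card_compl]) hind hdeg,
    not_isMinorOf_of_hubs s (by rw [Fintype.card_sum, Fintype.card_fin]; omega)
      completeBipartiteGraph_three_le_ncard_neighborSet hind hdeg⟩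

lemma le_c6Count_of_injective {V ι : Type*} [Fintype V] [Finite ι] {G : SimpleGraph V}
    {F : ι → Finset V} (hF : Function.Injective F) (hcyc : ∀ i, IsIndCycle G 6 (F i)) :
    Nat.card ι ≤ c6Count G := by
  rw [← Set.ncard_range_of_injective hF]
  exact Set.ncard_le_ncard (by rintro _ ⟨i, rfl⟩; exact hcyc i) (Set.toFinite _)

lemma c6Count_le_fI {n : ℕ} {G : SimpleGraph (Fin n)} (hG : G.Planar) : c6Count G ≤ fI n := by
  refine le_csSup ⟨Nat.card (Finset (Fin n)), ?_⟩ ⟨G, hG, rfl⟩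
  rintro _ ⟨G', -, rfl⟩
  exact (Set.ncard_le_ncard (Set.subset_univ _)).trans_eq (Set.ncard_univ _)

lemma isIndCycle_image_of_injective {V : Type*} [DecidableEq V] {G : SimpleGraph V} {m : ℕ}
    {v : Fin m → V} (hinj : Function.Injective v)
    (hadj : ∀ i j, G.Adj (v i) (v j) ↔ (cycleGraph m).Adj i j) :
    IsIndCycle G m (Finset.univ.image v) := by
  refine ⟨by rw [Finset.card_image_of_injective _ hinj, Finset.card_fin], ⟨RelIso.symm ?_⟩⟩
  refine ⟨(Equiv.ofInjective v hinj).trans (Equiv.setCongr (by simp)), ?_⟩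
  exact hadj _ _

lemma exists_eq_h0 {n : ℕ} (hn : 3 ≤ n) : ∃ p q r, 3 + p + q + r = n ∧ h0 n = p * q * r := by
  refine ⟨(n - 3) / 3, (n - 2) / 3, (n - 1) / 3, by omega, ?_⟩
  unfold h0
  split_ifs with h₀ h₁
  · rw [show (n - 3) / 3 = n / 3 - 1 by omega, show (n - 2) / 3 = n / 3 - 1 by omega,
      show (n - 1) / 3 = n / 3 - 1 by omega]
    ring
  · rw [show (n - 3) / 3 = (n - 4) / 3 by omega, show (n - 2) / 3 = (n - 4) / 3 by omega]
    ring
  · rw [show (n - 3) / 3 = (n - 5) / 3 by omega, show (n - 1) / 3 = (n - 2) / 3 by omega]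
    ring

/-- Vertices `0, 1, 2` of `hubGraph p q r` are hubs and the others form the blocks
`A = [3, 3+p)`, `B = [3+p, 3+p+q)`, `C = [3+p+q, 3+p+q+r)`; hub `0` sees `A ∪ C`, hub `1` sees
`A ∪ B` and hub `2` sees `B ∪ C`. -/
def hubAdj (p q h m : ℕ) : Prop :=
  3 ≤ m ∧ (h = 0 ∧ (m < 3 + p ∨ 3 + p + q ≤ m) ∨ h = 1 ∧ m < 3 + p + q ∨ h = 2 ∧ 3 + p ≤ m)

def hubGraph (p q r : ℕ) : SimpleGraph (Fin (3 + p + q + r)) :=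
  SimpleGraph.fromRel fun x y => hubAdj p q x y

section hubGraph

variable {p q r : ℕ}

lemma hubGraph_adj {x y : Fin (3 + p + q + r)} :
    (hubGraph p q r).Adj x y ↔ hubAdj p q x y ∨ hubAdj p q y x := by
  rw [hubGraph, fromRel_adj, Fin.ne_iff_vne, and_iff_right_iff_imp]
  unfold hubAdj
  omega

lemma hubGraph_ncard_neighborSet_le {x : Fin (3 + p + q + r)} (hx : 3 ≤ x.val) :
    ((hubGraph p q r).neighborSet x).ncard ≤ 2 := by
  obtain ⟨a, b, hab⟩ : ∃ a b : ℕ, ∀ y, (hubGraph p q r).Adj x y → y.val = a ∨ y.val = b := by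
    refine if hA : x.val < 3 + p then ⟨0, 1, ?_⟩ else
      if hB : x.val < 3 + p + q then ⟨1, 2, ?_⟩ else ⟨0, 2, ?_⟩ <;>
    · intro y hy
      rw [hubGraph_adj] at hy
      unfold hubAdj at hy
      omega
  calc _ ≤ ({a, b} : Set ℕ).ncard :=
        Set.ncard_le_ncard_of_injOn Fin.val hab Fin.val_injective.injOn (Set.toFinite _)
    _ ≤ 2 := (Set.ncard_insert_le _ _).trans (by simp)

theorem hubGraph_planar : (hubGraph p q r).Planar := by
  refine planar_of_hubs _ {⟨0, by omega⟩, ⟨1, by omega⟩, ⟨2, by omega⟩} Finset.card_le_three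
    ?_ ?_ <;> simp only [Finset.mem_insert, Finset.mem_singleton, Fin.ext_iff, not_or]
  · intro x hx y hy
    rw [hubGraph_adj]
    unfold hubAdj
    omega
  · intro x hx
    exact hubGraph_ncard_neighborSet_le (by omega)

def hubCycle (t : Fin p × Fin q × Fin r) : Fin 6 → Fin (3 + p + q + r) :=
  ![⟨0, by omega⟩, ⟨3 + t.1, by omega⟩, ⟨1, by omega⟩, ⟨3 + p + t.2.1, by omega⟩,
    ⟨2, by omega⟩, ⟨3 + p + q + t.2.2, by omega⟩]

lemma isIndCycle_hubCycle (t : Fin p × Fin q × Fin r) :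
    IsIndCycle (hubGraph p q r) 6 (Finset.univ.image (hubCycle t)) := by
  obtain ⟨⟨a, ha⟩, ⟨b, hb⟩, ⟨c, hc⟩⟩ := t
  refine isIndCycle_image_of_injective ?_ ?_
  · intro i j h
    fin_cases i <;> fin_cases j <;> simp [hubCycle, Fin.ext_iff] at h ⊢ <;> omega
  · intro i j
    fin_cases i <;> fin_cases j <;> simp +decide [hubCycle, hubGraph_adj, hubAdj] <;> omega

lemma hubCycle_image_injective :
    Function.Injective fun t : Fin p × Fin q × Fin r => Finset.univ.image (hubCycle t) := by
  intro t t' h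
  have hmem : ∀ i, ∃ j, hubCycle t' j = hubCycle t i := fun i => by
    simpa [h] using Finset.mem_image_of_mem (hubCycle t) (Finset.mem_univ i)
  obtain ⟨j₁, h₁⟩ := hmem 1
  obtain ⟨j₃, h₃⟩ := hmem 3
  obtain ⟨j₅, h₅⟩ := hmem 5
  obtain ⟨⟨a, ha⟩, ⟨b, hb⟩, ⟨c, hc⟩⟩ := t
  obtain ⟨⟨a', ha'⟩, ⟨b', hb'⟩, ⟨c', hc'⟩⟩ := t'
  have ea : a' = a := by fin_cases j₁ <;> simp [hubCycle, Fin.ext_iff] at h₁ <;> omega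
  have eb : b' = b := by fin_cases j₃ <;> simp [hubCycle, Fin.ext_iff] at h₃ <;> omega
  have ec : c' = c := by fin_cases j₅ <;> simp [hubCycle, Fin.ext_iff] at h₅ <;> omega
  subst ea eb ec
  rfl

theorem hubGraph_c6Count : p * q * r ≤ c6Count (hubGraph p q r) := by
  simpa [mul_assoc] using le_c6Count_of_injective hubCycle_image_injective isIndCycle_hubCycle

end hubGraph

theorem stmt14 (n : ℕ) (hn : 6 ≤ n) :
    (∃ G : SimpleGraph (Fin n), G.Planar ∧ h0 n ≤ c6Count G) ∧ h0 n ≤ fI n := by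
  obtain ⟨p, q, r, rfl, hh0⟩ := exists_eq_h0 (by omega : 3 ≤ n)
  have hcount : h0 (3 + p + q + r) ≤ c6Count (hubGraph p q r) := hh0 ▸ hubGraph_c6Count
  exact ⟨⟨hubGraph p q r, hubGraph_planar, hcount⟩, hcount.trans (c6Count_le_fI hubGraph_planar)⟩
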